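/- arXiv:1006.5134 — 2 statements merged into one kernel-verified Lean document; each statement's English description precedes it below -/
import Mathlib

section
/- For every natural number m, the alternating sum over i from 0 to 2m of (-1)^i * C(-2m-1, i) * C(-2m-1, 2m-i) * C(2m, i) equals (-1)^m * (3m)! / (m!)^3, where C(t,k) denotes the generalized binomial coefficient t(t-1)...(t-k+1)/k!. -/
def gchoose (t : ℚ) (k : ℕ) : ℚ := (∏ j ∈ Finset.range k, (t - j)) / (Nat.factorial k)

/-!
For `i ≤ n`, `(-1)^i C(-n-1, i) C(-n-1, n-i) C(n, i) = (-1)^n F(n, i)` with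
`F(n, i) = (-1)^i C(n+i, i) C(2n-i, n-i) C(n, i)`, so the left side is `S(m) = ∑ᵢ F(2m, i)`.
Zeilberger's algorithm gives a certificate `G(m, i) = R(m, i) F(2m+2, i)`, `R` rational, with
`(m+1)^3 F(2m+2, i) + (3m+1)(3m+2)(3m+3) F(2m, i) = G(m, i+1) - G(m, i)`.
As `F(n, i+1)/F(n, i)` and `F(n+1, i)/F(n, i)` are rational in `n` and `i`, this is a polynomial
identity once denominators are cleared. Telescoping over `i` gives
`(m+1)^3 S(m+1) = -(3m+1)(3m+2)(3m+3) S(m)`, the recurrence satisfied by `(-1)^m (3m)!/(m!)^3`.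
-/

open Finset Nat

lemma gchoose_natCast (n k : ℕ) : gchoose n k = n.choose k := by
  rw [gchoose, ← descPochhammer_eval_eq_prod_range, descPochhammer_eval_eq_descFactorial,
    descFactorial_eq_factorial_mul_choose, cast_mul, mul_div_cancel_left₀ _ (by positivity)]

lemma gchoose_neg_natCast_sub_one (n k : ℕ) :
    gchoose (-n - 1) k = (-1) ^ k * (n + k).choose k := by
  have hprod : ∏ j ∈ range k, ((-n - 1 : ℚ) - j) = (-1) ^ k * (n + 1).ascFactorial k := by
    have h := prod_neg (s := range k) fun j => ((n + 1 + j : ℕ) : ℚ)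
    rw [card_range] at h
    rw [ascFactorial_eq_prod_range, cast_prod, ← h]
    exact prod_congr rfl fun j _ => by push_cast; ring
  rw [gchoose, hprod, ascFactorial_eq_factorial_mul_choose, cast_mul, mul_div_assoc,
    mul_div_cancel_left₀ _ (by positivity)]

def summand (n i : ℕ) : ℚ :=
  (-1) ^ i * (n + i).choose i * (2 * n - i).choose (n - i) * n.choose i

lemma neg_one_pow_mul_gchoose_eq_summand {n i : ℕ} (h : i ≤ n) :
    (-1) ^ i * gchoose (-n - 1) i * gchoose (-n - 1) (n - i) * gchoose n i
      = (-1) ^ n * summand n i := by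
  obtain ⟨k, rfl⟩ := exists_add_of_le h
  rw [gchoose_neg_natCast_sub_one, gchoose_neg_natCast_sub_one, gchoose_natCast, summand,
    show i + k - i = k by omega, show 2 * (i + k) - i = i + k + k by omega]
  ring

lemma summand_eq_zero_of_lt {n i : ℕ} (h : n < i) : summand n i = 0 := by
  simp [summand, choose_eq_zero_of_lt h]

lemma summand_add_eq_factorial (i k : ℕ) :
    summand (i + k) i
      = (-1) ^ i * (2 * i + k)! * (i + 2 * k)! / ((i ! : ℚ) ^ 2 * k ! ^ 2 * (i + k)!) := by
  rw [summand, show i + k + i = i + (i + k) by ring, show 2 * (i + k) - i = k + (i + k) by omega,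
    show i + k - i = k by omega, cast_add_choose, cast_add_choose, cast_add_choose,
    show i + (i + k) = 2 * i + k by ring, show k + (i + k) = i + 2 * k by ring]
  field_simp

lemma summand_succ_left (n i : ℕ) :
    ((n : ℚ) + 1) * (n + 1 - i) ^ 2 * summand (n + 1) i
      = (n + 1 + i) * (2 * n + 1 - i) * (2 * n + 2 - i) * summand n i := by
  rcases lt_trichotomy i (n + 1) with hi | rfl | hi
  · obtain ⟨k, rfl⟩ := exists_add_of_le (le_of_lt_succ hi)
    rw [show i + k + 1 = i + (k + 1) by ring, summand_add_eq_factorial, summand_add_eq_factorial,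
      show 2 * i + (k + 1) = 2 * i + k + 1 by ring,
      show i + 2 * (k + 1) = i + 2 * k + 1 + 1 by ring, show i + (k + 1) = i + k + 1 by ring]
    simp only [factorial_succ]
    push_cast
    field_simp
    ring
  · rw [summand_eq_zero_of_lt (lt_add_one n)]
    push_cast
    ring
  · rw [summand_eq_zero_of_lt hi, summand_eq_zero_of_lt (by omega)]
    ring

lemma summand_succ_right (n i : ℕ) :
    ((i : ℚ) + 1) ^ 2 * (2 * n - i) * summand n (i + 1)
      = -((n + i + 1) * (n - i) ^ 2 * summand n i) := by
  rcases lt_trichotomy i n with hi | rfl | hi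
  · obtain ⟨k, rfl⟩ := exists_add_of_le (succ_le_of_lt hi)
    rw [summand_add_eq_factorial, show i + 1 + k = i + (k + 1) by ring, summand_add_eq_factorial,
      show 2 * (i + 1) + k = 2 * i + k + 1 + 1 by ring, show i + 1 + 2 * k = i + 2 * k + 1 by ring,
      show 2 * i + (k + 1) = 2 * i + k + 1 by ring,
      show i + 2 * (k + 1) = i + 2 * k + 1 + 1 by ring,
      show i + (k + 1) = i + k + 1 by ring, pow_succ (-1 : ℚ) i]
    simp only [factorial_succ]
    push_cast
    field_simp
    ring
  · rw [summand_eq_zero_of_lt (lt_add_one i)]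
    ring
  · rw [summand_eq_zero_of_lt hi, summand_eq_zero_of_lt (by omega)]
    ring

lemma summand_add_two (n i : ℕ) :
    ((n : ℚ) + 1 + i) * (2 * n + 1 - i) * (2 * n + 2 - i)
        * ((n + 2 + i) * (2 * n + 3 - i) * (2 * n + 4 - i)) * summand n i
      = (n + 1) * (n + 2) * (n + 1 - i) ^ 2 * (n + 2 - i) ^ 2 * summand (n + 2) i := by
  have h₀ := summand_succ_left n i
  have h₁ := summand_succ_left (n + 1) i
  push_cast at h₁
  linear_combination (-((n + 2 + i) * (2 * n + 3 - i) * (2 * n + 4 - i))) * h₀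
    - ((n + 1) * (n + 1 - i) ^ 2) * h₁

/-- Numerator of the rational certificate `R(m, x)` found by Zeilberger's algorithm. -/
def certificatePoly {R : Type*} [CommRing R] (m x : R) : R :=
  180 - 184 * x + 59 * x ^ 2 - 8 * x ^ 3 + x ^ 4
    + m * (1036 - 790 * x + 168 * x ^ 2 - 10 * x ^ 3)
    + m ^ 2 * (2192 - 1116 * x + 120 * x ^ 2) + m ^ 3 * (2024 - 520 * x) + 688 * m ^ 4

lemma certificatePoly_identity {R : Type*} [CommRing R] (m x : R) :
    2 * (m + 1) * ((2 * m + x + 1) * (2 * m + x + 2) * (4 * m + 1 - x) * (4 * m + 2 - x)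
        * (4 * m + 3 - x) * (4 * m + 4 - x))
      + 12 * (3 * m + 1) * (3 * m + 2) * (2 * m + 1) * (2 * m + 1 - x) ^ 2 * (2 * m + 2 - x) ^ 2
      = certificatePoly m (x + 1) * (2 * m + 2 - x) ^ 2 * (2 * m + x + 1)
        + x ^ 2 * certificatePoly m x * (4 * m + 1 - x) := by
  unfold certificatePoly
  ring

def certificate (m i : ℕ) : ℚ :=
  -((i : ℚ) ^ 2 * (m + 1) ^ 2 * certificatePoly (m : ℚ) i)
    / (2 * (2 * m + i + 1) * (2 * m + i + 2) * (4 * m + 2 - i) * (4 * m + 3 - i) * (4 * m + 4 - i))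
    * summand (2 * m + 2) i

lemma summand_recurrence_eq_certificate_sub {m i : ℕ} (hm : 1 ≤ m) (hi : i ≤ 2 * m + 2) :
    ((m : ℚ) + 1) ^ 3 * summand (2 * m + 2) i
        + (3 * m + 1) * (3 * m + 2) * (3 * m + 3) * summand (2 * m) i
      = certificate m (i + 1) - certificate m i := by
  have hm' : (1 : ℚ) ≤ m := by exact_mod_cast hm
  have hi' : (i : ℚ) ≤ 2 * m + 2 := by exact_mod_cast hi
  -- `W` is the common denominator of `R(m, i)`, `R(m, i+1) F(2m+2, i+1)/F(2m+2, i)` and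
  -- `F(2m, i)/F(2m+2, i)`; multiplied by `W`, the claim is `certificatePoly_identity`.
  set x := summand (2 * m + 2) i
  set W : ℚ := (2 * m + i + 1) * (2 * m + i + 2) * (4 * m + 1 - i) * (4 * m + 2 - i)
    * (4 * m + 3 - i) * (4 * m + 4 - i)
  have hW₀ : W ≠ 0 := by apply_rules [mul_ne_zero] <;> linarith
  have hdown : W * summand (2 * m) i
      = (2 * m + 1) * (2 * m + 2) * (2 * m + 1 - i) ^ 2 * (2 * m + 2 - i) ^ 2 * x := by
    have h := summand_add_two (2 * m) i
    push_cast at h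
    linear_combination h
  have hG₀ : 2 * W * certificate m i
      = -((m + 1) ^ 2 * i ^ 2 * certificatePoly (m : ℚ) i * (4 * m + 1 - i)) * x := by
    rw [certificate, div_mul_eq_mul_div, mul_div_assoc',
      div_eq_iff (by apply_rules [mul_ne_zero, two_ne_zero] <;> linarith)]
    ring
  have hG₁ : 2 * W * certificate m (i + 1)
      = (m + 1) ^ 2 * certificatePoly (m : ℚ) (i + 1) * (2 * m + 2 - i) ^ 2 * (2 * m + i + 1) * x := by
    have h := summand_succ_right (2 * m + 2) i
    rw [certificate, div_mul_eq_mul_div, mul_div_assoc',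
      div_eq_iff (by apply_rules [mul_ne_zero, two_ne_zero] <;> push_cast <;> linarith)]
    push_cast at h ⊢
    linear_combination (-2 * (m + 1) ^ 2 * certificatePoly (m : ℚ) (i + 1)
      * ((2 * m + i + 1) * (2 * m + i + 2) * (4 * m + 1 - i) * (4 * m + 2 - i) * (4 * m + 3 - i))) * h
  apply mul_left_cancel₀ (mul_ne_zero two_ne_zero hW₀)
  linear_combination 6 * (m + 1) * (3 * m + 1) * (3 * m + 2) * hdown - hG₁ + hG₀
    + (m + 1) ^ 2 * x * certificatePoly_identity (m : ℚ) i

def summandSum (n : ℕ) : ℚ := ∑ i ∈ range (n + 1), summand n i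

lemma sum_range_summand_of_le {n N : ℕ} (h : n + 1 ≤ N) :
    ∑ i ∈ range N, summand n i = summandSum n :=
  (sum_subset (range_subset_range.2 h) fun _ _ hi =>
    summand_eq_zero_of_lt (by simpa using hi)).symm

lemma summandSum_recurrence (m : ℕ) :
    ((m : ℚ) + 1) ^ 3 * summandSum (2 * m + 2)
      + (3 * m + 1) * (3 * m + 2) * (3 * m + 3) * summandSum (2 * m) = 0 := by
  rcases Nat.eq_zero_or_pos m with rfl | hm
  · norm_num [summandSum, summand, sum_range_succ, Nat.choose]
  rw [← sum_range_summand_of_le (le_refl (2 * m + 3)),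
    ← sum_range_summand_of_le (show 2 * m + 1 ≤ 2 * m + 3 by omega), mul_sum, mul_sum,
    ← sum_add_distrib, sum_congr rfl fun i hi =>
      summand_recurrence_eq_certificate_sub hm (mem_range_succ_iff.1 hi), sum_range_sub]
  simp [certificate, summand_eq_zero_of_lt (show 2 * m + 2 < 2 * m + 3 by omega)]

lemma summandSum_two_mul (m : ℕ) :
    summandSum (2 * m) = (-1) ^ m * (3 * m)! / (m ! : ℚ) ^ 3 := by
  induction m with
  | zero => simp [summandSum, summand]
  | succ m ih =>
    have h := summandSum_recurrence m
    have h3 : ((3 * (m + 1))! : ℚ) = (3 * m + 1) * (3 * m + 2) * (3 * m + 3) * (3 * m)! := by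
      rw [show 3 * (m + 1) = 3 * m + 1 + 1 + 1 by ring]
      simp only [factorial_succ]
      push_cast
      ring
    rw [ih] at h
    rw [show 2 * (m + 1) = 2 * m + 2 by ring, h3, factorial_succ, eq_div_iff (by positivity)]
    field_simp at h
    push_cast
    linear_combination h

/-- For every natural number `m`,
`∑_{i=0}^{2m} (-1)^i C(-2m-1,i) C(-2m-1,2m-i) C(2m,i) = (-1)^m (3m)! / (m!)^3`. -/
theorem stmt0 (m : ℕ) :
    ∑ i ∈ Finset.range (2 * m + 1),
      (-1 : ℚ) ^ i * gchoose (-2 * m - 1) i * gchoose (-2 * m - 1) (2 * m - i) *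
        gchoose (2 * m) i
    = (-1 : ℚ) ^ m * (Nat.factorial (3 * m)) / (Nat.factorial m : ℚ) ^ 3 := by
  have hcast : (-2 * m - 1 : ℚ) = -((2 * m : ℕ) : ℚ) - 1 := by push_cast; ring
  rw [hcast, show (2 * m : ℚ) = ((2 * m : ℕ) : ℚ) by norm_cast,
    sum_congr rfl fun i hi => neg_one_pow_mul_gchoose_eq_summand (mem_range_succ_iff.1 hi),
    ← mul_sum, (even_two_mul m).neg_one_pow, one_mul]
  exact summandSum_two_mul m
end

section
/- For every natural number m ≥ 1, the sum Sum(m) = Σ_{i=0}^{2m} (-1)^i C(-2m-1,i) C(-2m-1,2m-i) C(2m,i) satisfies the first-order recurrence -(m+1)^2 * Sum(m+1) - 3(3m+1)(3m+2) * Sum(m) = 0. -/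
/-- `Sum(m) = ∑_{i=0}^{2m} (-1)^i C(-2m-1,i) C(-2m-1,2m-i) C(2m,i)`. -/
def zhuSum (m : ℕ) : ℚ :=
  ∑ i ∈ Finset.range (2 * m + 1),
    (-1 : ℚ) ^ i * gchoose (-2 * m - 1) i * gchoose (-2 * m - 1) (2 * m - i) *
      gchoose (2 * m) i

lemma succ_mul_gchoose_succ (t : ℚ) (k : ℕ) :
    ((k : ℚ) + 1) * gchoose t (k + 1) = (t - k) * gchoose t k := by
  have hk : (k.factorial : ℚ) ≠ 0 := by positivity
  unfold gchoose
  rw [Finset.prod_range_succ, Nat.factorial_succ]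
  push_cast
  field_simp

lemma add_one_mul_gchoose (t : ℚ) (k : ℕ) :
    (t + 1) * gchoose t k = (t + 1 - k) * gchoose (t + 1) k := by
  have hprod : (t + 1) * ∏ j ∈ Finset.range k, (t - j)
      = (t + 1 - k) * ∏ j ∈ Finset.range k, (t + 1 - j) := by
    have hl := Finset.prod_range_succ' (fun j : ℕ => t + 1 - j) k
    have hr := Finset.prod_range_succ (fun j : ℕ => t + 1 - j) k
    simp only [Nat.cast_add, Nat.cast_one, Nat.cast_zero, sub_zero, add_sub_add_right_eq_sub]
      at hl
    rw [mul_comm, ← hl, hr, mul_comm]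
  unfold gchoose
  rw [mul_div_assoc', hprod, mul_div_assoc]

lemma add_one_mul_add_two_mul_gchoose (t : ℚ) (k : ℕ) :
    (t + 1) * (t + 2) * gchoose t k = (t + 1 - k) * (t + 2 - k) * gchoose (t + 2) k := by
  have h₁ := add_one_mul_gchoose t k
  have h₂ := add_one_mul_gchoose (t + 1) k
  rw [show t + 1 + 1 = t + 2 by ring] at h₂
  linear_combination (t + 2) * h₁ + (t + 1 - k) * h₂

lemma gchoose_natCast_of_lt {n k : ℕ} (h : n < k) : gchoose n k = 0 := by
  unfold gchoose
  rw [Finset.prod_eq_zero (Finset.mem_range.mpr h) (sub_self _), zero_div]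

def zhuTerm (m i : ℕ) : ℚ :=
  (-1 : ℚ) ^ i * gchoose (-2 * m - 1) i * gchoose (-2 * m - 1) (2 * m - i) * gchoose (2 * m) i

lemma zhuTerm_eq_zero {m i : ℕ} (hi : 2 * m < i) : zhuTerm m i = 0 := by
  have h : gchoose (2 * m) i = 0 := by exact_mod_cast gchoose_natCast_of_lt hi
  rw [zhuTerm, h, mul_zero]

lemma zhuSum_eq_sum_range (m n : ℕ) (hn : 2 * m + 1 ≤ n) :
    zhuSum m = ∑ i ∈ Finset.range n, zhuTerm m i :=
  Finset.sum_subset (Finset.range_subset_range.mpr hn) fun i _ hi =>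
    zhuTerm_eq_zero (by simp only [Finset.mem_range] at hi; omega)

def zhuScale (m : ℕ) : ℚ := (2 * m - 1) * (2 * m) * (2 * m + 1) ^ 2 * (2 * m + 2) ^ 2

lemma zhuScale_ne_zero {m : ℕ} (hm : 1 ≤ m) : zhuScale m ≠ 0 := by
  have : (1 : ℚ) ≤ m := by exact_mod_cast hm
  have : (0 : ℚ) < 2 * m - 1 := by linarith
  unfold zhuScale
  positivity

def zhuBase (m i : ℕ) : ℚ :=
  (-1 : ℚ) ^ i * gchoose (-2 * m - 1) i * gchoose (1 - 2 * m) (2 * m + 2 - i) *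
    gchoose (2 * m + 2) i

lemma zhuScale_mul_zhuTerm_succ (m i : ℕ) (hi : i ≤ 2 * m + 2) :
    zhuScale m * zhuTerm (m + 1) i =
      (2 * m + 1 + i) * (2 * m + 2 + i) * (4 * m + 1 - i) * (4 * m + 2 - i) * (4 * m + 3 - i) *
        (4 * m + 4 - i) * zhuBase m i := by
  rw [zhuScale]
  set M : ℚ := (m : ℚ)
  set I : ℚ := (i : ℚ)
  set k := 2 * m + 2 - i with hk
  have hK : (k : ℚ) = 2 * M + 2 - I := by rw [hk, Nat.cast_sub hi]; push_cast; ring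
  have hA : (2 * M + 1) * (2 * M + 2) * gchoose (-2 * M - 3) i
      = (2 * M + 1 + I) * (2 * M + 2 + I) * gchoose (-2 * M - 1) i := by
    have h := add_one_mul_add_two_mul_gchoose (-2 * M - 3) i
    rw [show -2 * M - 3 + 2 = -2 * M - 1 by ring] at h
    linear_combination h
  have hB : (2 * M - 1) * (2 * M) * (2 * M + 1) * (2 * M + 2) * gchoose (-2 * M - 3) k
      = (4 * M + 1 - I) * (4 * M + 2 - I) * (4 * M + 3 - I) * (4 * M + 4 - I) *
          gchoose (1 - 2 * M) k := by
    have h₁ := add_one_mul_add_two_mul_gchoose (-2 * M - 3) k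
    have h₂ := add_one_mul_add_two_mul_gchoose (-2 * M - 1) k
    rw [show -2 * M - 3 + 2 = -2 * M - 1 by ring, hK] at h₁
    rw [show -2 * M - 1 + 2 = 1 - 2 * M by ring, hK] at h₂
    linear_combination (2 * M) * (2 * M - 1) * h₁ + (4 * M + 4 - I) * (4 * M + 3 - I) * h₂
  have hT : zhuTerm (m + 1) i = (-1) ^ i * gchoose (-2 * M - 3) i * gchoose (-2 * M - 3) k *
      gchoose (2 * M + 2) i := by
    rw [zhuTerm, show 2 * (m + 1) - i = k by omega]
    push_cast
    rw [show -2 * ((m : ℚ) + 1) - 1 = -2 * M - 3 by ring,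
      show 2 * ((m : ℚ) + 1) = 2 * M + 2 by ring]
  calc (2 * M - 1) * (2 * M) * (2 * M + 1) ^ 2 * (2 * M + 2) ^ 2 * zhuTerm (m + 1) i
      = (-1) ^ i * ((2 * M + 1) * (2 * M + 2) * gchoose (-2 * M - 3) i) *
          ((2 * M - 1) * (2 * M) * (2 * M + 1) * (2 * M + 2) * gchoose (-2 * M - 3) k) *
          gchoose (2 * M + 2) i := by rw [hT]; ring
    _ = _ := by rw [hA, hB, zhuBase]; ring

lemma zhuScale_mul_zhuTerm (m i : ℕ) (hi : i ≤ 2 * m + 2) :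
    zhuScale m * zhuTerm m i =
      (2 * m + 1) * (2 * m + 2) * (2 * m + 1 - i) ^ 2 * (2 * m + 2 - i) ^ 2 * zhuBase m i := by
  rw [zhuScale]
  set M : ℚ := (m : ℚ)
  set I : ℚ := (i : ℚ)
  rcases Nat.lt_or_ge (2 * m) i with hlt | hle
  · have hI : (2 * M + 1 - I) * (2 * M + 2 - I) = 0 := by
      rcases (by omega : i = 2 * m + 1 ∨ i = 2 * m + 2) with rfl | rfl <;>
        simp only [I, Nat.cast_add, Nat.cast_mul, Nat.cast_ofNat, Nat.cast_one] <;> ring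
    rw [zhuTerm_eq_zero hlt]
    linear_combination (-(2 * M + 1) * (2 * M + 2) * (2 * M + 1 - I) * (2 * M + 2 - I) *
      zhuBase m i) * hI
  set k := 2 * m - i with hk
  have hK : (k : ℚ) = 2 * M - I := by rw [hk, Nat.cast_sub hle]; push_cast; ring
  have hB : (2 * M - 1) * (2 * M) * gchoose (-2 * M - 1) k
      = (2 * M + 1 - I) * (2 * M + 2 - I) * gchoose (1 - 2 * M) (k + 2) := by
    have h₁ := add_one_mul_add_two_mul_gchoose (-2 * M - 1) k
    have h₂ := succ_mul_gchoose_succ (1 - 2 * M) k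
    have h₃ := succ_mul_gchoose_succ (1 - 2 * M) (k + 1)
    rw [show -2 * M - 1 + 2 = 1 - 2 * M by ring, hK] at h₁
    push_cast at h₃
    rw [hK] at h₂ h₃
    linear_combination h₁ + (4 * M - I) * h₂ - (2 * M + 1 - I) * h₃
  have hC : (2 * M + 1) * (2 * M + 2) * gchoose (2 * M) i
      = (2 * M + 1 - I) * (2 * M + 2 - I) * gchoose (2 * M + 2) i := by
    linear_combination add_one_mul_add_two_mul_gchoose (2 * M) i
  calc (2 * M - 1) * (2 * M) * (2 * M + 1) ^ 2 * (2 * M + 2) ^ 2 * zhuTerm m i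
      = (-1) ^ i * gchoose (-2 * M - 1) i * ((2 * M - 1) * (2 * M) * gchoose (-2 * M - 1) k) *
          ((2 * M + 1) * (2 * M + 2) * gchoose (2 * M) i) * ((2 * M + 1) * (2 * M + 2)) := by
        rw [zhuTerm]; ring
    _ = _ := by rw [hB, hC, zhuBase, show 2 * m + 2 - i = k + 2 by omega]; ring

lemma zhuBase_succ (m i : ℕ) (hi : i ≤ 2 * m + 2) :
    ((i : ℚ) + 1) ^ 2 * (4 * m - i) * zhuBase m (i + 1) =
      -(2 * m + 1 + i) * (2 * m + 2 - i) ^ 2 * zhuBase m i := by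
  set M : ℚ := (m : ℚ)
  set I : ℚ := (i : ℚ)
  have hA : (I + 1) * gchoose (-2 * M - 1) (i + 1) = (-2 * M - 1 - I) * gchoose (-2 * M - 1) i :=
    succ_mul_gchoose_succ _ _
  have hC : (I + 1) * gchoose (2 * M + 2) (i + 1) = (2 * M + 2 - I) * gchoose (2 * M + 2) i :=
    succ_mul_gchoose_succ _ _
  rcases hi.lt_or_eq with hlt | rfl
  · set k := 2 * m + 1 - i with hk
    have hK : (k : ℚ) = 2 * M + 1 - I := by
      rw [hk, Nat.cast_sub (by omega)]; push_cast; ring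
    have hB := succ_mul_gchoose_succ (1 - 2 * M) k
    rw [hK] at hB
    calc (I + 1) ^ 2 * (4 * M - I) * zhuBase m (i + 1)
        = -(-1) ^ i * ((I + 1) * gchoose (-2 * M - 1) (i + 1)) *
            ((4 * M - I) * gchoose (1 - 2 * M) k) * ((I + 1) * gchoose (2 * M + 2) (i + 1)) := by
          rw [zhuBase, show 2 * m + 2 - (i + 1) = k by omega]; ring
      _ = -(-1) ^ i * ((-2 * M - 1 - I) * gchoose (-2 * M - 1) i) *
            (-(2 * M + 2 - I) * gchoose (1 - 2 * M) (k + 1)) *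
            ((2 * M + 2 - I) * gchoose (2 * M + 2) i) := by
          rw [hA, hC]; congr 2; linear_combination hB
      _ = _ := by rw [zhuBase, show 2 * m + 2 - i = k + 1 by omega]; ring
  · have hW : zhuBase m (2 * m + 2 + 1) = 0 := by
      have h : gchoose (2 * (m : ℚ) + 2) (2 * m + 2 + 1) = 0 := by
        exact_mod_cast gchoose_natCast_of_lt (show 2 * m + 2 < 2 * m + 2 + 1 by omega)
      rw [zhuBase, h, mul_zero]
    have hI : 2 * M + 2 - I = 0 := by simp only [M, I]; push_cast; ring
    rw [hW, hI]
    ring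

/-- Found by Zeilberger's algorithm. -/
def zhuCertPoly (M J : ℚ) : ℚ :=
  (180 + 1216 * M + 3228 * M ^ 2 + 4216 * M ^ 3 + 2712 * M ^ 4 + 688 * M ^ 5)
    - (184 + 974 * M + 1906 * M ^ 2 + 1636 * M ^ 3 + 520 * M ^ 4) * J
    + (59 + 227 * M + 288 * M ^ 2 + 120 * M ^ 3) * J ^ 2
    - (8 + 18 * M + 10 * M ^ 2) * J ^ 3
    + (1 + M) * J ^ 4

def zhuMate (m i : ℕ) : ℚ :=
  (i : ℚ) ^ 2 * (4 * m + 1 - i) * zhuCertPoly m i / 2 * zhuBase m i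

lemma zhuMate_zero (m : ℕ) : zhuMate m 0 = 0 := by
  simp [zhuMate]

lemma zhuMate_two_mul_add_three (m : ℕ) : zhuMate m (2 * m + 3) = 0 := by
  have h : gchoose (2 * (m : ℚ) + 2) (2 * m + 3) = 0 := by
    exact_mod_cast gchoose_natCast_of_lt (show 2 * m + 2 < 2 * m + 3 by omega)
  rw [zhuMate, zhuBase, h, mul_zero, mul_zero]

lemma zhuMate_sub_zhuMate (m i : ℕ) (hi : i ≤ 2 * m + 2) :
    zhuScale m *
        (-((m : ℚ) + 1) ^ 2 * zhuTerm (m + 1) i - 3 * (3 * m + 1) * (3 * m + 2) * zhuTerm m i) =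
      zhuMate m (i + 1) - zhuMate m i := by
  have h₁ := zhuScale_mul_zhuTerm_succ m i hi
  have h₀ := zhuScale_mul_zhuTerm m i hi
  have hW := zhuBase_succ m i hi
  rw [zhuMate, zhuMate]
  push_cast
  linear_combination (norm := skip) -((m : ℚ) + 1) ^ 2 * h₁
    - 3 * (3 * (m : ℚ) + 1) * (3 * m + 2) * h₀ - zhuCertPoly m (i + 1) / 2 * hW
  unfold zhuCertPoly
  ring

/-- For every `m ≥ 1`, `-(m+1)^2 Sum(m+1) - 3(3m+1)(3m+2) Sum(m) = 0`. -/
theorem stmt1 (m : ℕ) (hm : 1 ≤ m) :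
    -((m : ℚ) + 1) ^ 2 * zhuSum (m + 1) - 3 * (3 * (m : ℚ) + 1) * (3 * (m : ℚ) + 2) * zhuSum m
      = 0 := by
  apply mul_left_cancel₀ (zhuScale_ne_zero hm)
  rw [mul_zero, zhuSum_eq_sum_range (m + 1) (2 * m + 3) (by omega),
    zhuSum_eq_sum_range m (2 * m + 3) (by omega), Finset.mul_sum, Finset.mul_sum,
    ← Finset.sum_sub_distrib, Finset.mul_sum]
  calc ∑ i ∈ Finset.range (2 * m + 3), zhuScale m *
        (-((m : ℚ) + 1) ^ 2 * zhuTerm (m + 1) i - 3 * (3 * m + 1) * (3 * m + 2) * zhuTerm m i)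
      = ∑ i ∈ Finset.range (2 * m + 3), (zhuMate m (i + 1) - zhuMate m i) :=
        Finset.sum_congr rfl fun i hi =>
          zhuMate_sub_zhuMate m i (by rw [Finset.mem_range] at hi; omega)
    _ = 0 := by
      rw [Finset.sum_range_sub, zhuMate_two_mul_add_three, zhuMate_zero, sub_zero]
end
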